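/- A hidden path exists with respect to ⟨i,m⟩ (i.e., for every k = 0,...,m there is a node ⟨j_k,k⟩ not revealed to ⟨i,m⟩) if and only if there exists a run r' of the full-information protocol with r'_i(m) = r_i(m) in which some process active at time m knows ∃0, provided K_i∃0 does not hold at (r,m). Moreover, in such a witnessing run r', the adversary can be chosen so that j_0 has initial value 0, each ⟨j_k,k⟩ for k < m crashes sending a message solely to ⟨j_{k+1},k+1⟩, and j_m is nonfaulty. -/

import Mathlib

attribute [local instance] Classical.propDecidable

/-- An adversary in the synchronous crash-failure model: an input vector of binary
initial values, a failure pattern given by the delivery relation `F` (`F m j i` means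
the message sent by `j` at time `m` is delivered to `i` at time `m+1`, i.e. in round `m+1`),
and a crash round for each process (`⊤` meaning the process never crashes).
A process behaves correctly before its crashing round and sends nothing afterwards;
during its crashing round it may send to an arbitrary subset. -/
structure Adversary (n : ℕ) where
  init : Fin n → Bool
  F : ℕ → Fin n → Fin n → Prop
  crash : Fin n → ℕ∞
  crash_pos : ∀ j, 1 ≤ crash j
  before_crash : ∀ (m : ℕ) (j i : Fin n), ((m + 1 : ℕ) : ℕ∞) < crash j → F m j i
  after_crash : ∀ (m : ℕ) (j i : Fin n), crash j < ((m + 1 : ℕ) : ℕ∞) → ¬ F m j i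

namespace Adversary

variable {n : ℕ}

/-- A process is faulty if it crashes at some point. -/
def Faulty (A : Adversary n) (j : Fin n) : Prop := A.crash j ≠ ⊤

/-- The number `f` of actual failures in the run determined by the adversary. -/
noncomputable def numFaults (A : Adversary n) : ℕ := {j | A.Faulty j}.ncard

/-- A process is active at time `m` if it has not crashed before time `m`. -/
def Active (A : Adversary n) (j : Fin n) (m : ℕ) : Prop := ((m : ℕ) : ℕ∞) < A.crash j

end Adversary

/-- `Seen A ⟨j,ℓ⟩ ⟨i,m⟩`: node `⟨j,ℓ⟩` is in the view (communication graph) of node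
`⟨i,m⟩`, i.e. there is a message chain from `⟨j,ℓ⟩` to `⟨i,m⟩`. -/
inductive Seen {n : ℕ} (A : Adversary n) : Fin n × ℕ → Fin n × ℕ → Prop
  | refl (p : Fin n × ℕ) : Seen A p p
  | self {p : Fin n × ℕ} {i : Fin n} {m : ℕ} : Seen A p (i, m) → Seen A p (i, m + 1)
  | step {p : Fin n × ℕ} {j i : Fin n} {m : ℕ} : Seen A p (j, m) → A.F m j i →
      Seen A p (i, m + 1)

open Adversary

/-- Two adversaries give process `i` the same view at time `m` in a full-information
protocol: the same nodes are seen, with the same initial values at seen time-0 nodes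
and the same incoming edges at seen later nodes. -/
def sameView {n : ℕ} (A B : Adversary n) (i : Fin n) (m : ℕ) : Prop :=
  (∀ p, Seen A p (i, m) ↔ Seen B p (i, m)) ∧
  (∀ j, Seen A (j, 0) (i, m) → A.init j = B.init j) ∧
  (∀ (k : ℕ) (j j' : Fin n), Seen A (j', k + 1) (i, m) → (A.F k j j' ↔ B.F k j j'))

/-- The local state of (active) process `i` at time `m` is the same under both
adversaries: `i` is active in both and has the same full-information view. -/
def sameLocal {n : ℕ} (A B : Adversary n) (i : Fin n) (m : ℕ) : Prop :=
  A.Active i m ∧ B.Active i m ∧ sameView A B i m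

/-- The runs of the system are those generated by adversaries with at most `t` crashes. -/
def Valid {n : ℕ} (t : ℕ) (A : Adversary n) : Prop := A.numFaults ≤ t

/-- Knowledge in the full-information protocol: `i` knows the fact `φ` at time `m`
iff `φ` holds at time `m` in every run (with at most `t` failures) in which `i` has
the same local state. -/
def Knows {n : ℕ} (t : ℕ) (φ : Adversary n → ℕ → Prop) (A : Adversary n) (i : Fin n)
    (m : ℕ) : Prop :=
  ∀ B : Adversary n, Valid t B → sameLocal A B i m → φ B m

/-- The fact `∃v`: some process has initial value `v`. -/
def existsVal {n : ℕ} (v : Bool) : Adversary n → ℕ → Prop := fun A _ => ∃ j, A.init j = v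

/-- Node `⟨j',m'⟩` is revealed to `⟨i,m⟩`: either it is seen by `⟨i,m⟩`, or for some
seen node `⟨i',m'⟩` the edge `(⟨j',m'-1⟩,⟨i',m'⟩)` is absent from `i`'s view
(proving that `j'` crashed before time `m'`). -/
def RevealedNode {n : ℕ} (A : Adversary n) (j' : Fin n) (m' : ℕ) (i : Fin n) (m : ℕ) :
    Prop :=
  Seen A (j', m') (i, m) ∨
  ∃ (i' : Fin n) (k : ℕ), m' = k + 1 ∧ Seen A (i', k + 1) (i, m) ∧ ¬ A.F k j' i'

/-- Time `k` is revealed to `⟨i,m⟩` if every node `⟨j',k⟩` is revealed to `⟨i,m⟩`. -/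
def RevealedTime {n : ℕ} (A : Adversary n) (k : ℕ) (i : Fin n) (m : ℕ) : Prop :=
  ∀ j', RevealedNode A j' k i m

/-- A hidden path w.r.t. `⟨i,m⟩`: for each `k ≤ m` a node `⟨j_k,k⟩` not revealed to `⟨i,m⟩`. -/
def HiddenPath {n : ℕ} (A : Adversary n) (i : Fin n) (m : ℕ) : Prop :=
  ∃ js : ℕ → Fin n, ∀ k ≤ m, ¬ RevealedNode A (js k) k i m

/-- `not-known(∃0)`: no process active at time `m` knows `∃0`. -/
def notKnown0 {n : ℕ} (t : ℕ) : Adversary n → ℕ → Prop :=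
  fun A m => ∀ j, A.Active j m → ¬ Knows t (existsVal false) A j m

/-- A (full-information, deterministic) decision protocol, described by the decision
status function: `P A i m = some v` iff by time `m` process `i` has decided `v`
in the run determined by adversary `A`. -/
abbrev ProtoDec (n : ℕ) : Type := Adversary n → Fin n → ℕ → Option Bool

/-- Sanity conditions making a decision-status function a protocol: decisions are
irrevocable, and (for active processes) depend only on the local state. -/
def IsProtocol {n : ℕ} (t : ℕ) (P : ProtoDec n) : Prop :=
  (∀ A i m v, P A i m = some v → P A i (m + 1) = some v) ∧
  (∀ A B i m, Valid t A → Valid t B → sameLocal A B i m → P A i m = P B i m)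

/-- Process `i` performs the action `decide(v)` at time `m`: it is decided on `v`
at `m` and was undecided before. -/
def DecidesAt {n : ℕ} (P : ProtoDec n) (A : Adversary n) (i : Fin n) (m : ℕ) (v : Bool) :
    Prop :=
  P A i m = some v ∧ ∀ k < m, P A i k = none

/-- Decision: every correct process eventually decides. -/
def Decision {n : ℕ} (t : ℕ) (P : ProtoDec n) : Prop :=
  ∀ A : Adversary n, Valid t A → ∀ i, ¬ A.Faulty i → ∃ m, P A i m ≠ none

/-- Validity: if all initial values are `v` then correct processes decide `v`. -/
def Validity {n : ℕ} (t : ℕ) (P : ProtoDec n) : Prop :=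
  ∀ A : Adversary n, Valid t A → ∀ v : Bool, (∀ j, A.init j = v) →
    ∀ i m w, ¬ A.Faulty i → P A i m = some w → w = v

/-- Agreement: all correct processes decide on the same value. -/
def Agreement {n : ℕ} (t : ℕ) (P : ProtoDec n) : Prop :=
  ∀ A : Adversary n, Valid t A → ∀ i j m m' v w, ¬ A.Faulty i → ¬ A.Faulty j →
    P A i m = some v → P A j m' = some w → v = w

def ConsensusSolves {n : ℕ} (t : ℕ) (P : ProtoDec n) : Prop :=
  Decision t P ∧ Validity t P ∧ Agreement t P

/-- Uniform Agreement: all processes that decide (faulty or not) decide the same value. -/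
def UniformAgreement {n : ℕ} (t : ℕ) (P : ProtoDec n) : Prop :=
  ∀ A : Adversary n, Valid t A → ∀ i j m m' v w,
    P A i m = some v → P A j m' = some w → v = w

def UniformConsensusSolves {n : ℕ} (t : ℕ) (P : ProtoDec n) : Prop :=
  Decision t P ∧ Validity t P ∧ UniformAgreement t P

/-- `Q` dominates `P`: for every adversary and process, if `i` has decided by time `m`
in `P` then `i` has decided by time `m` in `Q`. -/
def Dominates {n : ℕ} (t : ℕ) (Q P : ProtoDec n) : Prop :=
  ∀ A : Adversary n, Valid t A → ∀ i m, P A i m ≠ none → Q A i m ≠ none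

def StrictlyDominates {n : ℕ} (t : ℕ) (Q P : ProtoDec n) : Prop :=
  Dominates t Q P ∧ ¬ Dominates t P Q

/-- Turn a per-time decision rule into a decision-status function (the first decision
taken is kept forever). -/
def runDec (step : ℕ → Option Bool) : ℕ → Option Bool
  | 0 => step 0
  | m + 1 => (runDec step m).elim (step (m + 1)) some

/-- The protocol `P₀`: decide 0 as soon as `K_i ∃0` holds, otherwise decide 1 at time `t+1`. -/
noncomputable def P0 (n t : ℕ) : ProtoDec n := fun A i =>
  runDec fun m =>
    if Knows t (existsVal false) A i m then some false
    else if m = t + 1 then some true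
    else none

/-- The unbeatable protocol `Opt₀`: decide 0 as soon as `K_i ∃0` holds, and decide 1
as soon as `K_i not-known(∃0)` holds. -/
noncomputable def Opt0 (n t : ℕ) : ProtoDec n := fun A i =>
  runDec fun m =>
    if Knows t (existsVal false) A i m then some false
    else if Knows t (notKnown0 t) A i m then some true
    else none

/-- The number of processes with initial value `false` (0). -/
noncomputable def zeros {n : ℕ} (A : Adversary n) : ℕ :=
  (Finset.univ.filter fun j => A.init j = false).card

/-- The number of processes with initial value `true` (1). -/
noncomputable def ones {n : ℕ} (A : Adversary n) : ℕ :=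
  (Finset.univ.filter fun j => A.init j = true).card

/-- The fact `Maj = 0`: at least `n/2` initial values are 0. -/
def Maj0 (n : ℕ) : Adversary n → ℕ → Prop := fun A _ => n ≤ 2 * zeros A

/-- The fact `Maj = 1`: strictly more than `n/2` initial values are 1. -/
def Maj1 (n : ℕ) : Adversary n → ℕ → Prop := fun A _ => n < 2 * ones A

noncomputable def seenZeros {n : ℕ} (A : Adversary n) (i : Fin n) (m : ℕ) : ℕ :=
  (Finset.univ.filter fun j => Seen A (j, 0) (i, m) ∧ A.init j = false).card

noncomputable def seenOnes {n : ℕ} (A : Adversary n) (i : Fin n) (m : ℕ) : ℕ :=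
  (Finset.univ.filter fun j => Seen A (j, 0) (i, m) ∧ A.init j = true).card

/-- `Maj(vals(i,m))`: 0 if at least half of the initial values known to `i` at `m`
are 0, and 1 otherwise. -/
noncomputable def MajSeen {n : ℕ} (A : Adversary n) (i : Fin n) (m : ℕ) : Bool :=
  if seenOnes A i m ≤ seenZeros A i m then false else true

/-- The unbeatable majority consensus protocol `Opt_Maj`. -/
noncomputable def OptMaj (n t : ℕ) : ProtoDec n := fun A i =>
  runDec fun m =>
    if Knows t (Maj0 n) A i m then some false
    else if Knows t (Maj1 n) A i m then some true
    else if ∃ k ≤ m, RevealedTime A k i m then some (MajSeen A i m)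
    else none

/-- The fact `∀1`: all initial values are 1. -/
def all1 (n : ℕ) : Adversary n → ℕ → Prop := fun A _ => ∀ j, A.init j = true

/-- The sender set of `i` repeats at `⟨i,m⟩`: `i` hears from the same set of processes
in rounds `m-1` and `m` (only meaningful for `m ≥ 2`). -/
def senderSetRepeats {n : ℕ} (A : Adversary n) (i : Fin n) (m : ℕ) : Prop :=
  ∀ j, (A.F (m - 2) j i ↔ A.F (m - 1) j i)

/-- The protocol `P0_opt` of Halpern, Moses and Waarts. -/
noncomputable def P0opt (n t : ℕ) : ProtoDec n := fun A i =>
  runDec fun m =>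
    if Knows t (existsVal false) A i m then some false
    else if Knows t (all1 n) A i m ∨ (2 ≤ m ∧ senderSetRepeats A i m) then some true
    else none

/-- The fact `∃correct(v)`: some correct (never-failing) process knows `∃v`. -/
def ExistsCorrectKnows {n : ℕ} (t : ℕ) (v : Bool) : Adversary n → ℕ → Prop :=
  fun A m => ∃ j, ¬ A.Faulty j ∧ Knows t (existsVal v) A j m

/-- The number `d` of failures process `i` knows of at time `m`: the number of
processes `j ≠ i` from which `i` receives no message in round `m`. -/
noncomputable def knownFaults {n : ℕ} (A : Adversary n) (i : Fin n) : ℕ → ℕ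
  | 0 => 0
  | m + 1 => (Finset.univ.filter fun j => j ≠ i ∧ ¬ A.F m j i).card

/-- The protocol `u-P₀` for uniform consensus: decide 0 as soon as
`K_i ∃correct(0)` holds, otherwise decide 1 at time `t+1`. -/
noncomputable def uP0 (n t : ℕ) : ProtoDec n := fun A i =>
  runDec fun m =>
    if Knows t (ExistsCorrectKnows t false) A i m then some false
    else if m = t + 1 then some true
    else none

/-- The unbeatable uniform consensus protocol `u-Opt₀`. -/
noncomputable def uOpt0 (n t : ℕ) : ProtoDec n := fun A i =>
  runDec fun m =>
    if Knows t (ExistsCorrectKnows t false) A i m then some false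
    else if ¬ Knows t (existsVal false) A i m ∧ ∃ k ≤ m, RevealedTime A k i m then
      some true
    else none

/-- All decisions in the run `P[A]` are taken at or before time `m`. -/
def AllDecidedBy {n : ℕ} (P : ProtoDec n) (A : Adversary n) (m : ℕ) : Prop :=
  ∀ i k, P A i k ≠ none → P A i m ≠ none

/-- `Q` last-decider dominates `P`. -/
def LDDominates {n : ℕ} (t : ℕ) (Q P : ProtoDec n) : Prop :=
  ∀ A : Adversary n, Valid t A → ∀ m, AllDecidedBy P A m → AllDecidedBy Q A m

/-- A 0-chain for `⟨i,m⟩`: distinct processes `j₀,…,j_d = i` with `d ≤ m`, `j₀` having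
initial value 0, and `j_k` receiving a message from `j_{k-1}` at time `k` (round `k`). -/
def ZeroChain {n : ℕ} (A : Adversary n) (i : Fin n) (m : ℕ) : Prop :=
  ∃ d ≤ m, ∃ js : ℕ → Fin n, js d = i ∧
    (∀ k ≤ d, ∀ l ≤ d, js k = js l → k = l) ∧
    A.init (js 0) = false ∧
    ∀ k, 1 ≤ k → k ≤ d → A.F (k - 1) (js (k - 1)) (js k)

/-! A hidden path `⟨j₀,0⟩, …, ⟨j_m,m⟩` is turned into a witnessing run by letting each `j_k`
(`k < m`) crash in round `k+1` after sending only to `j_{k+1}`, giving `j₀` the value 0 and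
keeping `j_m` alive. Since no `⟨j_k,k⟩` is revealed, the edges into `i`'s view out of path nodes
are exactly those sent before the node's own time, so `i`'s view is unchanged, while the value 0
travels along the chain to `j_m`. Conversely, if `j` active at `m` knows `∃0` in a run `r'`
indistinguishable for `i`, then `j` sees a 0 through a chain; at a revealed time `k` the chain
passes through a node that is either seen by `i` (so `i` sees the 0 and knows `∃0`) or known
to have crashed by time `k ≤ m`, which cannot pass the chain on to the active `j`. -/

namespace Adversary

variable {n : ℕ} (A : Adversary n)

lemma le_crash_of_F {l : ℕ} {j i : Fin n} (h : A.F l j i) : ((l + 1 : ℕ) : ℕ∞) ≤ A.crash j :=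
  not_lt.mp fun hlt => A.after_crash l j i hlt h

lemma crash_le_of_not_F {l : ℕ} {j i : Fin n} (h : ¬ A.F l j i) :
    A.crash j ≤ ((l + 1 : ℕ) : ℕ∞) :=
  not_lt.mp fun hlt => h (A.before_crash l j i hlt)

lemma not_F_of_crash_le {l : ℕ} {j i : Fin n} (h : A.crash j ≤ l) : ¬ A.F l j i :=
  A.after_crash l j i (h.trans_lt (by exact_mod_cast l.lt_succ_self))

end Adversary

namespace Seen

variable {n : ℕ} {A : Adversary n}

lemma snd_le {p q : Fin n × ℕ} (h : Seen A p q) : p.2 ≤ q.2 := by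
  induction h with
  | refl => exact le_rfl
  | self _ ih => exact ih.trans (Nat.le_succ _)
  | step _ _ ih => exact ih.trans (Nat.le_succ _)

lemma trans {p q r : Fin n × ℕ} (hpq : Seen A p q) (hqr : Seen A q r) : Seen A p r := by
  induction hqr with
  | refl => exact hpq
  | self _ ih => exact ih.self
  | step _ hF ih => exact ih.step hF

lemma self_of_le {j : Fin n} {k l : ℕ} (h : k ≤ l) : Seen A (j, k) (j, l) := by
  induction l, h using Nat.le_induction with
  | base => exact refl _
  | succ l _ ih => exact ih.self

lemma of_chain {js : ℕ → Fin n} {m : ℕ} (h : ∀ k < m, A.F k (js k) (js (k + 1))) :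
    Seen A (js 0, 0) (js m, m) := by
  induction m with
  | zero => exact refl _
  | succ m ih => exact (ih fun k hk => h k (hk.trans m.lt_succ_self)).step (h m m.lt_succ_self)

lemma exists_mid {p q : Fin n × ℕ} (h : Seen A p q) {k : ℕ} (hpk : p.2 ≤ k) (hkq : k ≤ q.2) :
    ∃ r : Fin n, Seen A p (r, k) ∧ Seen A (r, k) q := by
  induction h with
  | refl => exact ⟨p.1, le_antisymm hkq hpk ▸ refl _, le_antisymm hkq hpk ▸ refl _⟩
  | @self i l hp ih =>
    rcases hkq.lt_or_eq with hlt | rfl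
    · obtain ⟨r, hpr, hrq⟩ := ih (Nat.lt_succ_iff.mp hlt)
      exact ⟨r, hpr, hrq.self⟩
    · exact ⟨i, hp.self, refl _⟩
  | @step j i l hp hF ih =>
    rcases hkq.lt_or_eq with hlt | rfl
    · obtain ⟨r, hpr, hrq⟩ := ih (Nat.lt_succ_iff.mp hlt)
      exact ⟨r, hpr, hrq.step hF⟩
    · exact ⟨i, hp.step hF, refl _⟩

lemma fst_eq_of_crash_le {j : Fin n} {k : ℕ} {q : Fin n × ℕ} (hc : A.crash j ≤ k)
    (h : Seen A (j, k) q) : q.1 = j := by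
  induction h with
  | refl => rfl
  | self _ ih => exact ih
  | step hp hF ih =>
    subst ih
    exact absurd hF (A.not_F_of_crash_le (hc.trans (by exact_mod_cast hp.snd_le)))

end Seen

section View

variable {n : ℕ} {A B : Adversary n} {i : Fin n} {m : ℕ}

lemma Seen.agree_mp (hF : ∀ l j i', Seen A (i', l + 1) (i, m) → (A.F l j i' ↔ B.F l j i'))
    {p q : Fin n × ℕ} (h : Seen A p q) (hq : Seen A q (i, m)) : Seen B p q := by
  induction h with
  | refl => exact Seen.refl _
  | self _ ih => exact (ih ((Seen.refl _).self.trans hq)).self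
  | step _ hAF ih => exact (ih (((Seen.refl _).step hAF).trans hq)).step ((hF _ _ _ hq).mp hAF)

lemma Seen.agree_mpr (hF : ∀ l j i', Seen A (i', l + 1) (i, m) → (A.F l j i' ↔ B.F l j i'))
    {p q : Fin n × ℕ} (h : Seen B p q) (hq : Seen A q (i, m)) : Seen A p q := by
  induction h with
  | refl => exact Seen.refl _
  | self _ ih => exact (ih ((Seen.refl _).self.trans hq)).self
  | step _ hBF ih =>
    have hAF := (hF _ _ _ hq).mpr hBF
    exact (ih (((Seen.refl _).step hAF).trans hq)).step hAF

lemma sameView_of_agree (hF : ∀ l j i', Seen A (i', l + 1) (i, m) → (A.F l j i' ↔ B.F l j i'))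
    (hinit : ∀ j, Seen A (j, 0) (i, m) → A.init j = B.init j) : sameView A B i m :=
  ⟨fun _ => ⟨fun h => h.agree_mp hF (Seen.refl _), fun h => h.agree_mpr hF (Seen.refl _)⟩,
    hinit, hF⟩

lemma knows_existsVal_of_seen {t : ℕ} {j : Fin n} {v : Bool} (hs : Seen A (j, 0) (i, m))
    (hv : A.init j = v) : Knows t (existsVal v) A i m :=
  fun _ _ hB => ⟨j, (hB.2.2.2.1 j hs).symm.trans hv⟩

/-- If not, the run in which every initial value unseen by `⟨i,m⟩` is flipped to `!v` is
indistinguishable for `i` and contains no `v`. -/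
lemma exists_seen_of_knows_existsVal {t : ℕ} {v : Bool} (hA : Valid t A) (hi : A.Active i m)
    (hk : Knows t (existsVal v) A i m) : ∃ j, Seen A (j, 0) (i, m) ∧ A.init j = v := by
  let C : Adversary n := { A with init := fun j => if Seen A (j, 0) (i, m) then A.init j else !v }
  obtain ⟨j, hj⟩ := hk C hA
    ⟨hi, hi, sameView_of_agree (fun _ _ _ _ => Iff.rfl) fun j hs => (if_pos hs).symm⟩
  by_cases hs : Seen A (j, 0) (i, m)
  · exact ⟨j, hs, by simpa [C, hs] using hj⟩
  · simp [C, hs] at hj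

lemma F_of_not_revealedNode {j i' : Fin n} {k : ℕ} (hj : ¬ RevealedNode A j (k + 1) i m)
    (hs : Seen A (i', k + 1) (i, m)) : A.F k j i' :=
  by_contra fun hF => hj (Or.inr ⟨i', k, rfl, hs, hF⟩)

lemma RevealedNode.seen_of_sameView {j' j : Fin n} {k : ℕ} (hrev : RevealedNode A j' k i m)
    (hv : sameView A B i m) (hk : k ≤ m) (hs : Seen B (j', k) (j, m)) (hj : B.Active j m) :
    Seen A (j', k) (i, m) := by
  rcases hrev with hseen | ⟨i', l, rfl, hs', hnF⟩
  · exact hseen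
  have hcrash : B.crash j' ≤ ((l + 1 : ℕ) : ℕ∞) :=
    B.crash_le_of_not_F fun hF => hnF ((hv.2.2 l j' i' hs').mpr hF)
  have hjj : j = j' := hs.fst_eq_of_crash_le hcrash
  subst hjj
  exact absurd (hj.trans_le (hcrash.trans (by exact_mod_cast hk))) (lt_irrefl _)

lemma HiddenPath.of_forall_not_revealedTime (h : ∀ k ≤ m, ¬ RevealedTime A k i m) :
    HiddenPath A i m := by
  have hex : ∀ k, ∃ j, k ≤ m → ¬ RevealedNode A j k i m := fun k => by
    by_cases hk : k ≤ m
    · obtain ⟨j, hj⟩ := not_forall.mp (h k hk)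
      exact ⟨j, fun _ => hj⟩
    · exact ⟨i, fun h => absurd h hk⟩
  choose js hjs using hex
  exact ⟨js, hjs⟩

lemma hiddenPath_of_knows_existsVal {t : ℕ} {j : Fin n} (hB : Valid t B) (hv : sameView A B i m)
    (hj : B.Active j m) (hkB : Knows t (existsVal false) B j m)
    (hnk : ¬ Knows t (existsVal false) A i m) : HiddenPath A i m := by
  obtain ⟨j₀, h₀j, hinit⟩ := exists_seen_of_knows_existsVal hB hj hkB
  refine HiddenPath.of_forall_not_revealedTime fun k hk hrev => hnk ?_
  obtain ⟨jk, h₀k, hkj⟩ := h₀j.exists_mid (Nat.zero_le k) hk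
  have hkA : Seen A (jk, k) (i, m) := (hrev jk).seen_of_sameView hv hk hkj hj
  have h₀A : Seen A (j₀, 0) (i, m) := (hv.1 _).mpr (h₀k.trans ((hv.1 _).mp hkA))
  exact knows_existsVal_of_seen h₀A ((hv.2.1 j₀ h₀A).trans hinit)

end View

section PathAdversary

variable {n : ℕ}

noncomputable def pathIndex (js : ℕ → Fin n) (m : ℕ) (j : Fin n) : ℕ :=
  if h : ∃ k ≤ m, js k = j then Nat.find h else m + 1

lemma pathIndex_apply {js : ℕ → Fin n} {m k : ℕ} (hinj : Set.InjOn js (Set.Iic m))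
    (hk : k ≤ m) : pathIndex js m (js k) = k := by
  have h : ∃ k' ≤ m, js k' = js k := ⟨k, hk, rfl⟩
  rw [pathIndex, dif_pos h]
  exact hinj (Nat.find_spec h).1 hk (Nat.find_spec h).2

lemma pathIndex_of_forall_ne {js : ℕ → Fin n} {m : ℕ} {j : Fin n} (h : ∀ k ≤ m, js k ≠ j) :
    pathIndex js m j = m + 1 := by
  rw [pathIndex, dif_neg (by simpa using h)]

/-- `A` modified along the path `js 0, …, js m`: `js 0` gets initial value 0, each `js k` with
`k < m` crashes in round `k+1` sending only to `js (k+1)`, and `js m` never crashes. -/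
noncomputable def pathAdversary (A : Adversary n) (js : ℕ → Fin n) (m : ℕ) : Adversary n where
  init j := if j = js 0 then false else A.init j
  F l j i' :=
    if pathIndex js m j < m then l < pathIndex js m j ∨ (l = pathIndex js m j ∧ i' = js (l + 1))
    else if pathIndex js m j = m then True else A.F l j i'
  crash j :=
    if pathIndex js m j < m then ((pathIndex js m j + 1 : ℕ) : ℕ∞)
    else if pathIndex js m j = m then ⊤ else A.crash j
  crash_pos j := by
    split_ifs
    · exact_mod_cast Nat.le_add_left 1 _
    · exact le_top
    · exact A.crash_pos j
  before_crash l j i' h := by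
    split_ifs at h ⊢
    · exact Or.inl (by exact_mod_cast (Nat.succ_lt_succ_iff.mp (by exact_mod_cast h)))
    · exact A.before_crash l j i' h
  after_crash l j i' h := by
    split_ifs at h ⊢
    · have : pathIndex js m j < l := Nat.succ_lt_succ_iff.mp (by exact_mod_cast h)
      omega
    · exact absurd h (not_lt.mpr le_top)
    · exact A.after_crash l j i' h

variable {A : Adversary n} {js : ℕ → Fin n} {m : ℕ}

lemma pathAdversary_init_zero : (pathAdversary A js m).init (js 0) = false := if_pos rfl

lemma pathAdversary_init_of_ne {j : Fin n} (h : j ≠ js 0) :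
    (pathAdversary A js m).init j = A.init j := if_neg h

lemma pathAdversary_crash_of_lt (hinj : Set.InjOn js (Set.Iic m)) {k : ℕ} (hk : k < m) :
    (pathAdversary A js m).crash (js k) = ((k + 1 : ℕ) : ℕ∞) := by
  simp only [pathAdversary, pathIndex_apply hinj hk.le, if_pos hk]

lemma pathAdversary_crash_last (hinj : Set.InjOn js (Set.Iic m)) :
    (pathAdversary A js m).crash (js m) = ⊤ := by
  simp [pathAdversary, pathIndex_apply hinj le_rfl]

lemma pathAdversary_F_of_lt (hinj : Set.InjOn js (Set.Iic m)) {k l : ℕ} {i' : Fin n}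
    (hk : k < m) :
    (pathAdversary A js m).F l (js k) i' ↔ l < k ∨ (l = k ∧ i' = js (k + 1)) := by
  simp only [pathAdversary, pathIndex_apply hinj hk.le, if_pos hk]
  constructor <;> rintro (h | ⟨rfl, h⟩) <;> simp_all

lemma pathAdversary_F_last (hinj : Set.InjOn js (Set.Iic m)) {l : ℕ} {i' : Fin n} :
    (pathAdversary A js m).F l (js m) i' := by
  simp [pathAdversary, pathIndex_apply hinj le_rfl]

lemma pathAdversary_crash_of_forall_ne {j : Fin n} (h : ∀ k ≤ m, js k ≠ j) :
    (pathAdversary A js m).crash j = A.crash j := by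
  simp [pathAdversary, pathIndex_of_forall_ne h]

lemma pathAdversary_F_of_forall_ne {j : Fin n} (h : ∀ k ≤ m, js k ≠ j) {l : ℕ} {i' : Fin n} :
    (pathAdversary A js m).F l j i' ↔ A.F l j i' := by
  simp [pathAdversary, pathIndex_of_forall_ne h]

end PathAdversary

section Hidden

variable {n : ℕ} {A : Adversary n} {i : Fin n} {m : ℕ} {js : ℕ → Fin n}

/-- A later edge would make `⟨js k, k⟩` seen. An earlier one is sent before `js k` crashes, as
the edge `(⟨js k, k-1⟩, ⟨i,k⟩)` must be present for `⟨js k, k⟩` to stay unrevealed. -/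
lemma F_iff_of_hidden (hhid : ∀ k ≤ m, ¬ RevealedNode A (js k) k i m)
    {k l : ℕ} {i' : Fin n} (hk : k ≤ m) (hs : Seen A (i', l + 1) (i, m)) :
    A.F l (js k) i' ↔ l < k := by
  refine ⟨fun hF => not_le.mp fun hkl => hhid k hk (Or.inl ?_), fun hlk => ?_⟩
  · exact ((Seen.self_of_le hkl).step hF).trans hs
  obtain ⟨k, rfl⟩ : ∃ k', k = k' + 1 := ⟨k - 1, by omega⟩
  rcases (Nat.lt_succ_iff_lt_or_eq.mp hlk) with hlk | rfl
  · have hcrash := A.le_crash_of_F (F_of_not_revealedNode (hhid _ hk) (Seen.self_of_le hk))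
    have hlt : ((l + 1 : ℕ) : ℕ∞) < ((k + 1 : ℕ) : ℕ∞) := by exact_mod_cast Nat.succ_lt_succ hlk
    exact A.before_crash l _ i' (hlt.trans_le hcrash)
  · exact F_of_not_revealedNode (hhid _ hk) hs

lemma injOn_of_hidden (hhid : ∀ k ≤ m, ¬ RevealedNode A (js k) k i m) :
    Set.InjOn js (Set.Iic m) := by
  have key : ∀ k l, k < l → l ≤ m → js k ≠ js l := fun k l hkl hl he => by
    have hs : Seen A (i, k + 1) (i, m) := Seen.self_of_le (by omega)
    have hk := (F_iff_of_hidden hhid (k := k) (hkl.le.trans hl) hs).not.mpr (lt_irrefl k)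
    exact hk (he ▸ (F_iff_of_hidden hhid hl hs).mpr hkl)
  intro k hk l hl he
  rcases lt_trichotomy k l with h | h | h
  · exact absurd he (key k l h hl)
  · exact h
  · exact absurd he.symm (key l k h hk)

lemma ne_of_hidden (hhid : ∀ k ≤ m, ¬ RevealedNode A (js k) k i m)
    {k : ℕ} (hk : k ≤ m) : js k ≠ i :=
  fun he => hhid k hk (Or.inl (he ▸ Seen.self_of_le hk))

lemma faulty_of_hidden (hhid : ∀ k ≤ m, ¬ RevealedNode A (js k) k i m)
    {k : ℕ} (hk : k < m) : A.Faulty (js k) :=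
  ne_top_of_le_ne_top (by simp) <| A.crash_le_of_not_F
    ((F_iff_of_hidden hhid hk.le (Seen.self_of_le hk)).not.mpr (lt_irrefl k))

lemma valid_pathAdversary (hhid : ∀ k ≤ m, ¬ RevealedNode A (js k) k i m)
    {t : ℕ} (hA : Valid t A) : Valid t (pathAdversary A js m) := by
  have hinj := injOn_of_hidden hhid
  refine (Set.ncard_le_ncard (fun j hj => ?_) (Set.toFinite _)).trans hA
  by_cases hpath : ∃ k ≤ m, js k = j
  · obtain ⟨k, hk, rfl⟩ := hpath
    rcases hk.lt_or_eq with hk | rfl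
    · exact faulty_of_hidden hhid hk
    · exact absurd (pathAdversary_crash_last hinj) hj
  · push Not at hpath
    exact (pathAdversary_crash_of_forall_ne hpath).symm.trans_ne hj

lemma sameView_pathAdversary (hhid : ∀ k ≤ m, ¬ RevealedNode A (js k) k i m) :
    sameView A (pathAdversary A js m) i m := by
  have hinj := injOn_of_hidden hhid
  refine sameView_of_agree (fun l j i' hs => ?_) fun j hs => ?_
  · by_cases hpath : ∃ k ≤ m, js k = j
    · obtain ⟨k, hk, rfl⟩ := hpath
      rw [F_iff_of_hidden hhid hk hs]
      rcases hk.lt_or_eq with hk | rfl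
      · rw [pathAdversary_F_of_lt hinj hk]
        refine (or_iff_left fun ⟨hlk, hi'⟩ => hhid (k + 1) hk (Or.inl ?_)).symm
        rw [← hi', ← hlk]
        exact hs
      · exact iff_of_true hs.snd_le (pathAdversary_F_last hinj)
    · push Not at hpath
      exact (pathAdversary_F_of_forall_ne hpath).symm
  · refine (pathAdversary_init_of_ne fun he => hhid 0 (Nat.zero_le m) (Or.inl ?_)).symm
    rw [← he]
    exact hs

lemma exists_adversary_of_hidden (hhid : ∀ k ≤ m, ¬ RevealedNode A (js k) k i m)
    {t : ℕ} (hA : Valid t A) (hi : A.Active i m) :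
    ∃ B : Adversary n, Valid t B ∧ sameLocal A B i m ∧
      B.Active (js m) m ∧ Knows t (existsVal false) B (js m) m ∧
      B.init (js 0) = false ∧
      (∀ k < m, B.crash (js k) = ((k + 1 : ℕ) : ℕ∞)) ∧
      (∀ k < m, ∀ i' : Fin n, B.F k (js k) i' → i' = js (k + 1)) ∧
      ¬ B.Faulty (js m) := by
  have hinj := injOn_of_hidden hhid
  have hlast : (pathAdversary A js m).crash (js m) = ⊤ := pathAdversary_crash_last hinj
  have hchain : Seen (pathAdversary A js m) (js 0, 0) (js m, m) :=
    Seen.of_chain fun k hk => (pathAdversary_F_of_lt hinj hk).mpr (Or.inr ⟨rfl, rfl⟩)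
  refine ⟨pathAdversary A js m, valid_pathAdversary hhid hA,
    ⟨hi, ?_, sameView_pathAdversary hhid⟩,
    by rw [Adversary.Active, hlast]; exact ENat.natCast_lt_top m,
    knows_existsVal_of_seen hchain pathAdversary_init_zero,
    pathAdversary_init_zero, fun k hk => pathAdversary_crash_of_lt hinj hk,
    fun k hk i' hF => ?_, not_not.mpr hlast⟩
  · rw [Adversary.Active, pathAdversary_crash_of_forall_ne fun k hk => ne_of_hidden hhid hk]
    exact hi
  · rcases (pathAdversary_F_of_lt hinj hk).mp hF with h | ⟨-, h⟩
    · exact absurd h (lt_irrefl k)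
    · exact h

end Hidden

theorem hidden_path_iff_indistinguishable_knowledge_general (n t : ℕ)
    (A : Adversary n) (hA : Valid t A) (i : Fin n) (m : ℕ) (hact : A.Active i m)
    (hnk : ¬ Knows t (existsVal false) A i m) :
    (HiddenPath A i m ↔
      ∃ B : Adversary n, Valid t B ∧ sameLocal A B i m ∧
        ∃ j, B.Active j m ∧ Knows t (existsVal false) B j m) ∧
    (∀ js : ℕ → Fin n, (∀ k ≤ m, ¬ RevealedNode A (js k) k i m) →
      ∃ B : Adversary n, Valid t B ∧ sameLocal A B i m ∧
        B.Active (js m) m ∧ Knows t (existsVal false) B (js m) m ∧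
        B.init (js 0) = false ∧
        (∀ k < m, B.crash (js k) = ((k + 1 : ℕ) : ℕ∞)) ∧
        (∀ k < m, ∀ i' : Fin n, B.F k (js k) i' → i' = js (k + 1)) ∧
        ¬ B.Faulty (js m)) := by
  refine ⟨⟨fun ⟨js, hjs⟩ => ?_, fun ⟨B, hB, hsl, j, hj, hkB⟩ => ?_⟩,
    fun js hjs => exists_adversary_of_hidden hjs hA hact⟩
  · obtain ⟨B, hB, hsl, hact', hkB, -⟩ := exists_adversary_of_hidden hjs hA hact
    exact ⟨B, hB, hsl, js m, hact', hkB⟩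
  · exact hiddenPath_of_knows_existsVal hB hsl.2.2 hj hkB hnk

/-- Provided `¬ K_i ∃0` at `⟨i,m⟩`, a hidden path w.r.t. `⟨i,m⟩` exists iff there is an
indistinguishable run in which some process active at `m` knows `∃0`; moreover the
witnessing adversary can be chosen so that `j₀` has initial value 0, each `⟨j_k,k⟩`
(`k < m`) crashes sending a message solely to `⟨j_{k+1},k+1⟩`, and `j_m` is nonfaulty. -/
theorem hidden_path_iff_indistinguishable_knowledge (n t : ℕ) (ht : t < n)
    (A : Adversary n) (hA : Valid t A) (i : Fin n) (m : ℕ) (hact : A.Active i m)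
    (hnk : ¬ Knows t (existsVal false) A i m) :
    (HiddenPath A i m ↔
      ∃ B : Adversary n, Valid t B ∧ sameLocal A B i m ∧
        ∃ j, B.Active j m ∧ Knows t (existsVal false) B j m) ∧
    (∀ js : ℕ → Fin n, (∀ k ≤ m, ¬ RevealedNode A (js k) k i m) →
      ∃ B : Adversary n, Valid t B ∧ sameLocal A B i m ∧
        B.Active (js m) m ∧ Knows t (existsVal false) B (js m) m ∧
        B.init (js 0) = false ∧
        (∀ k < m, B.crash (js k) = ((k + 1 : ℕ) : ℕ∞)) ∧
        (∀ k < m, ∀ i' : Fin n, B.F k (js k) i' → i' = js (k + 1)) ∧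
        ¬ B.Faulty (js m)) :=
  hidden_path_iff_indistinguishable_knowledge_general n t A hA i m hact hnk
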